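/- arXiv:1102.4794 — 2 statements merged into one kernel-verified Lean document; each statement's English description precedes it below -/
import Mathlib

section
/- Let X have continuous CDF F_X supported on a union of ordered disjoint intervals 𝒳₁,…,𝒳_L each carrying probability mass 1/L, and define g(x) = F_X(x) − (l−1)/L for x ∈ 𝒳_l. Then g maps each 𝒳_l onto (a subset of) [0, 1/L] (the images coincide up to null sets), Y = g(X) is uniformly distributed on [0, 1/L], the preimage of almost every y has exactly L elements, and the conditional law of the interval index W given Y = y is uniform on {1,…,L}; consequently H(W | Y) = log L, achieving the maximal information loss bound. -/
/-!
On the interval `S i` the map `g` is the partial distribution function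
`x ↦ P(X ≤ x, X ∈ S i)`, which is continuous and increases from `0` to `1/L`. By the probability
integral transform (valid for any finite measure on `ℝ` with continuous distribution function),
`g(X)` on the event `{X ∈ S i}` therefore has law Lebesgue measure on `[0, 1/L]`, the same for
every `i`. So the joint law of `(Y, W)` is the product of the law of `Y` with the uniform law on
the indices, which makes `W` conditionally uniform given `Y`, with entropy `log L`.

Every `y` lies in `g(S i)`, an interval, up to a null set. If `y` had two preimages in `S i`,
the monotone `g` would be constant between them, so `y = g q` for a rational `q`; these `y`
form a countable, hence null, set.
-/

open MeasureTheory ProbabilityTheory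

/-- Shannon entropy of a measure on a discrete space. -/
noncomputable def mEntropy {α : Type*} [MeasurableSpace α] (ν : Measure α) : ℝ :=
  - ∑' a, (ν {a}).toReal * Real.log (ν {a}).toReal

/-- Conditional entropy `H(W|Y) = ∫ H(W | Y = y) dP_Y(y)` of a discrete random variable
`W` given a general random variable `Y`, via the regular conditional distribution. -/
noncomputable def condEntropyDG {Ω α β : Type*} [MeasurableSpace Ω] [MeasurableSpace α]
    [StandardBorelSpace α] [Nonempty α] [MeasurableSpace β]
    (μ : Measure Ω) [IsFiniteMeasure μ] (W : Ω → α) (Y : Ω → β) : ℝ :=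
  ∫ y, mEntropy (condDistrib W Y μ y) ∂(μ.map Y)

open Set Filter Topology
open scoped ENNReal Finset

theorem tendsto_measure_Iic_atBot_zero {α : Type*} [MeasurableSpace α] [TopologicalSpace α]
    [LinearOrder α] [ClosedIicTopology α] [OpensMeasurableSpace α] [Nonempty α] [NoMinOrder α]
    [(atBot : Filter α).IsCountablyGenerated] (μ : Measure α) [IsFiniteMeasure μ] :
    Tendsto (fun x => μ (Iic x)) atBot (𝓝 0) := by
  have hempty : ⋂ x : α, Iic x = ∅ := by
    ext x
    simpa using exists_lt x
  have h := tendsto_measure_iInter_atBot (μ := μ)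
    (fun x : α => measurableSet_Iic.nullMeasurableSet) monotone_Iic
    ⟨Classical.arbitrary α, measure_ne_top μ _⟩
  rwa [hempty, measure_empty] at h

theorem measure_cdf_preimage_Iic (ν : Measure ℝ) [IsFiniteMeasure ν]
    (hF : Continuous fun x => ν.real (Iic x)) {t : ℝ} (ht₀ : 0 ≤ t) (ht : t < ν.real univ) :
    ν ((fun x => ν.real (Iic x)) ⁻¹' Iic t) = ENNReal.ofReal t := by
  set F : ℝ → ℝ := fun x => ν.real (Iic x)
  have hmono : Monotone F := fun x y hxy => measureReal_mono (Iic_subset_Iic.2 hxy)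
  have htop : Tendsto F atTop (𝓝 (ν.real univ)) :=
    (ENNReal.tendsto_toReal (measure_ne_top _ _)).comp (tendsto_measure_Iic_atTop ν)
  have hbot : Tendsto F atBot (𝓝 0) :=
    (ENNReal.tendsto_toReal ENNReal.zero_ne_top).comp (tendsto_measure_Iic_atBot_zero ν)
  have hcdf : ∀ x, ν (Iic x) = ENNReal.ofReal (F x) := fun x => (ofReal_measureReal).symm
  apply le_antisymm
  · set A := F ⁻¹' Iic t
    obtain ⟨b, hb⟩ : BddAbove A := by
      obtain ⟨b, hb⟩ := (htop.eventually_const_lt ht).exists_forall_of_atTop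
      exact ⟨b, fun x hx => le_of_not_gt fun hbx => (hb x hbx.le).not_ge hx⟩
    rcases A.eq_empty_or_nonempty with hA | hA
    · simp [hA]
    have hsup : sSup A ∈ A := (isClosed_Iic.preimage hF).csSup_mem hA ⟨b, hb⟩
    calc ν A ≤ ν (Iic (sSup A)) := measure_mono fun x hx => le_csSup ⟨b, hb⟩ hx
      _ ≤ ENNReal.ofReal t := (hcdf _).trans_le (ENNReal.ofReal_le_ofReal hsup)
  · rcases ht₀.eq_or_lt with rfl | ht₀
    · simp
    obtain ⟨a, rfl⟩ : t ∈ range F := mem_range_of_exists_le_of_exists_ge hF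
      (hbot.eventually_le_const ht₀).exists (htop.eventually_const_le ht).exists
    rw [← hcdf]
    exact measure_mono fun x hx => hmono hx

theorem map_cdf_eq_restrict_Icc (ν : Measure ℝ) [IsFiniteMeasure ν]
    (hF : Continuous fun x => ν.real (Iic x)) :
    ν.map (fun x => ν.real (Iic x)) = volume.restrict (Icc 0 (ν.real univ)) := by
  set F : ℝ → ℝ := fun x => ν.real (Iic x)
  have hmono : Monotone F := fun x y hxy => measureReal_mono (Iic_subset_Iic.2 hxy)
  have hF_le : ∀ x, F x ≤ ν.real univ := fun x => measureReal_mono (subset_univ _)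
  have hfin : IsFiniteMeasure (volume.restrict (Icc 0 (ν.real univ))) :=
    isFiniteMeasure_restrict.2 measure_Icc_lt_top.ne
  refine Measure.ext_of_Iic _ _ fun t => ?_
  have hIcc : Iic t ∩ Icc 0 (ν.real univ) = Icc 0 (min t (ν.real univ)) := by
    ext; simp only [mem_inter_iff, mem_Iic, mem_Icc, le_min_iff]; tauto
  rw [Measure.map_apply hmono.measurable measurableSet_Iic,
    Measure.restrict_apply measurableSet_Iic, hIcc, Real.volume_Icc, sub_zero]
  rcases lt_or_ge t 0 with ht₀ | ht₀
  · have hF : F ⁻¹' Iic t = ∅ :=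
      eq_empty_of_forall_notMem fun x hx => ht₀.not_ge (measureReal_nonneg.trans hx)
    rw [hF, measure_empty, ENNReal.ofReal_of_nonpos ((min_le_left _ _).trans ht₀.le)]
  rcases lt_or_ge t (ν.real univ) with ht | ht
  · rw [measure_cdf_preimage_Iic ν hF ht₀ ht, min_eq_left ht.le]
  · rw [show F ⁻¹' Iic t = univ from eq_univ_of_forall fun x => (hF_le x).trans ht,
      min_eq_right ht, ofReal_measureReal]

theorem continuous_measureReal_Iic_inter (ν : Measure ℝ) [IsFiniteMeasure ν] {s : Set ℝ}
    (hs : MeasurableSet s) (hF : Continuous fun x => ν.real (Iic x)) :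
    Continuous fun x => ν.real (Iic x ∩ s) := by
  have hinc : ∀ ⦃x y⦄, x ≤ y → 0 ≤ ν.real (Iic y ∩ s) - ν.real (Iic x ∩ s) ∧
      ν.real (Iic y ∩ s) - ν.real (Iic x ∩ s) ≤ ν.real (Iic y) - ν.real (Iic x) := by
    intro x y hxy
    rw [← measureReal_sdiff (inter_subset_inter_left _ (Iic_subset_Iic.2 hxy))
        (measurableSet_Iic.inter hs), ← measureReal_sdiff (Iic_subset_Iic.2 hxy) measurableSet_Iic]
    exact ⟨measureReal_nonneg, measureReal_mono fun z hz => ⟨hz.1.1, fun h => hz.2 ⟨h, hz.1.2⟩⟩⟩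
  have hdist : ∀ x y, dist (ν.real (Iic y ∩ s)) (ν.real (Iic x ∩ s)) ≤
      dist (ν.real (Iic y)) (ν.real (Iic x)) := by
    intro x y
    wlog hxy : x ≤ y generalizing x y
    · rw [dist_comm, dist_comm (ν.real (Iic y))]
      exact this y x (le_of_not_ge hxy)
    obtain ⟨h₀, h₁⟩ := hinc hxy
    rw [Real.dist_eq, Real.dist_eq, abs_of_nonneg h₀, abs_of_nonneg (h₀.trans h₁)]
    exact h₁
  exact continuous_iff_continuousAt.2 fun x => tendsto_iff_dist_tendsto_zero.2 <|
    squeeze_zero (fun _ => dist_nonneg) (fun y => hdist x y)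
      (tendsto_iff_dist_tendsto_zero.1 (hF.tendsto x))

theorem map_restrict_eq_restrict_Icc_of_eqOn (ν : Measure ℝ) [IsFiniteMeasure ν] {s : Set ℝ}
    (hs : MeasurableSet s) (hF : Continuous fun x => ν.real (Iic x)) {g : ℝ → ℝ}
    (hg : EqOn g (fun x => ν.real (Iic x ∩ s)) s) :
    (ν.restrict s).map g = volume.restrict (Icc 0 (ν.real s)) := by
  have hcdf : ∀ x, (ν.restrict s).real (Iic x) = ν.real (Iic x ∩ s) := fun x =>
    measureReal_restrict_apply measurableSet_Iic
  have hcont : Continuous fun x => (ν.restrict s).real (Iic x) := by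
    simpa only [hcdf] using continuous_measureReal_Iic_inter ν hs hF
  rw [Measure.map_congr (ae_restrict_of_forall_mem hs fun x hx => (hg hx).trans (hcdf x).symm),
    map_cdf_eq_restrict_Icc _ hcont, measureReal_restrict_apply_univ]

section OrderedPartition

variable {ν : Measure ℝ} {n : ℕ} {S : Fin n → Set ℝ}

theorem measure_compl_iUnion_eq_zero_of_measure_eq_inv [IsProbabilityMeasure ν]
    [Nonempty (Fin n)] (hS : ∀ i, MeasurableSet (S i))
    (hdisj : Pairwise (Function.onFun Disjoint S)) (hmass : ∀ i, ν (S i) = (n : ℝ≥0∞)⁻¹) :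
    ν (⋃ i, S i)ᶜ = 0 := by
  have hn : (n : ℝ≥0∞) ≠ 0 := Nat.cast_ne_zero.2 (Fin.pos_iff_nonempty.2 ‹_›).ne'
  rw [prob_compl_eq_zero_iff (MeasurableSet.iUnion hS), measure_iUnion hdisj hS, tsum_fintype]
  simp [hmass, ENNReal.mul_inv_cancel hn (ENNReal.natCast_ne_top n)]

theorem measureReal_Iic_eq_of_mem [IsFiniteMeasure ν] (hS : ∀ i, MeasurableSet (S i))
    (hdisj : Pairwise (Function.onFun Disjoint S))
    (hordered : ∀ i j : Fin n, i < j → ∀ x ∈ S i, ∀ y ∈ S j, x < y)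
    (hcover : ν (⋃ i, S i)ᶜ = 0) {c : ℝ} (hmass : ∀ i, ν.real (S i) = c) {i : Fin n} {x : ℝ}
    (hx : x ∈ S i) : ν.real (Iic x) = i * c + ν.real (Iic x ∩ S i) := by
  have hterm : ∀ j, ν.real (Iic x ∩ S j) =
      (if j < i then c else 0) + if j = i then ν.real (Iic x ∩ S i) else 0 := by
    intro j
    rcases lt_trichotomy j i with h | rfl | h
    · rw [inter_eq_right.2 fun y hy => mem_Iic.2 (hordered j i h y hy x hx).le]
      simp [h, h.ne, hmass]
    · simp
    · rw [eq_empty_of_forall_notMem (s := Iic x ∩ S j) fun y hy =>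
        (hordered i j h x hx y hy.2).not_ge hy.1]
      simp [h.ne', not_lt.2 h.le]
  calc ν.real (Iic x) = ν.real (⋃ j, Iic x ∩ S j) := by
        rw [← inter_iUnion, measureReal_def, measureReal_def, measure_inter_conull hcover]
    _ = ∑ j, ν.real (Iic x ∩ S j) :=
        measureReal_iUnion_fintype
          (hdisj.mono fun _ _ => Disjoint.mono inter_subset_right inter_subset_right)
          fun j => measurableSet_Iic.inter (hS j)
    _ = i * c + ν.real (Iic x ∩ S i) := by
        rw [Finset.sum_congr rfl fun j _ => hterm j, Finset.sum_add_distrib,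
          Finset.sum_ite_eq', if_pos (Finset.mem_univ i), ← Finset.sum_filter, Finset.sum_const,
          nsmul_eq_mul, Finset.filter_gt_eq_Iio, Fin.card_Iio]

theorem eqOn_measureReal_Iic_inter_of_eq_sub [IsProbabilityMeasure ν] [Nonempty (Fin n)]
    (hS : ∀ i, MeasurableSet (S i)) (hdisj : Pairwise (Function.onFun Disjoint S))
    (hordered : ∀ i j : Fin n, i < j → ∀ x ∈ S i, ∀ y ∈ S j, x < y)
    (hmass : ∀ i, ν (S i) = (n : ℝ≥0∞)⁻¹) {g : ℝ → ℝ}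
    (hg : ∀ i : Fin n, ∀ x ∈ S i, g x = ν.real (Iic x) - (i : ℕ) / n) (i : Fin n) :
    EqOn g (fun x => ν.real (Iic x ∩ S i)) (S i) := by
  intro x hx
  have hreal : ∀ j, ν.real (S j) = 1 / n := fun j => by simp [measureReal_def, hmass]
  rw [hg i x hx, measureReal_Iic_eq_of_mem hS hdisj hordered
    (measure_compl_iUnion_eq_zero_of_measure_eq_inv hS hdisj hmass) hreal hx]
  ring

end OrderedPartition

theorem subsingleton_inter_preimage_of_notMem_range_rat {s : Set ℝ} (hs : s.OrdConnected)
    {g : ℝ → ℝ} (hg : MonotoneOn g s) {y : ℝ} (hy : y ∉ range fun q : ℚ => g q) :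
    (s ∩ g ⁻¹' {y}).Subsingleton := by
  intro a ha b hb
  by_contra hab
  wlog hlt : a < b generalizing a b
  · exact this hb ha (Ne.symm hab) ((le_of_not_gt hlt).lt_of_ne (Ne.symm hab))
  obtain ⟨q, haq, hqb⟩ := exists_rat_btwn hlt
  have hq : (q : ℝ) ∈ s := hs.out ha.1 hb.1 ⟨haq.le, hqb.le⟩
  have hga : g a = y := ha.2
  have hgb : g b = y := hb.2
  exact hy ⟨q, le_antisymm (hgb ▸ hg hq hb.1 hqb.le) (hga ▸ hg ha.1 hq haq.le)⟩

theorem ae_existsUnique_mem_preimage {ν : Measure ℝ} {s : Set ℝ} (hs : s.OrdConnected)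
    {g : ℝ → ℝ} (hgm : Measurable g) (hmono : MonotoneOn g s) (hcont : ContinuousOn g s)
    (hac : (ν.restrict s).map g ≪ volume) :
    ∀ᵐ y ∂(ν.restrict s).map g, ∃! x, x ∈ s ∧ g x = y := by
  have himage : MeasurableSet (g '' s) :=
    (isPreconnected_iff_ordConnected.1 (hs.isPreconnected.image g hcont)).measurableSet
  have hmem : ∀ᵐ y ∂(ν.restrict s).map g, y ∈ g '' s :=
    (ae_map_iff hgm.aemeasurable himage).2
      (ae_restrict_of_forall_mem hs.measurableSet fun x hx => mem_image_of_mem g hx)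
  filter_upwards [hmem, hac.ae_le ((countable_range fun q : ℚ => g q).ae_notMem volume)]
    with y ⟨x, hx, hxy⟩ hy
  exact ⟨x, ⟨hx, hxy⟩, fun x' hx' =>
    subsingleton_inter_preimage_of_notMem_range_rat hs hmono hy hx' ⟨hx, hxy⟩⟩

theorem ae_existsUnique_mem_preimage_of_eqOn (ν : Measure ℝ) [IsFiniteMeasure ν] {s : Set ℝ}
    (hs : s.OrdConnected) (hF : Continuous fun x => ν.real (Iic x)) {g : ℝ → ℝ}
    (hgm : Measurable g) (hg : EqOn g (fun x => ν.real (Iic x ∩ s)) s) :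
    ∀ᵐ y ∂(ν.restrict s).map g, ∃! x, x ∈ s ∧ g x = y := by
  have hmono : MonotoneOn g s := (Monotone.monotoneOn (fun x y hxy =>
    measureReal_mono (inter_subset_inter_left _ (Iic_subset_Iic.2 hxy))) _).congr hg.symm
  refine ae_existsUnique_mem_preimage hs hgm hmono
    ((continuous_measureReal_Iic_inter ν hs.measurableSet hF).continuousOn.congr hg) ?_
  rw [map_restrict_eq_restrict_Icc_of_eqOn ν hs.measurableSet hF hg]
  exact Measure.absolutelyContinuous_of_le Measure.restrict_le_self

theorem measure_preimage_inter_preimage_comp_eq_map_restrict {Ω α β ι : Type*}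
    [MeasurableSpace Ω] [MeasurableSpace α] [MeasurableSpace β] {P : Measure Ω} {X : Ω → α}
    {g : α → β} {S : ι → Set α} {W : Ω → ι} (hX : Measurable X) (hg : Measurable g)
    (hS : ∀ i, MeasurableSet (S i)) (hdisj : Pairwise (Function.onFun Disjoint S))
    (hcover : P.map X (⋃ i, S i)ᶜ = 0) (hW : ∀ ω i, X ω ∈ S i → W ω = i) (i : ι)
    {A : Set β} (hA : MeasurableSet A) :
    P (W ⁻¹' {i} ∩ (fun ω => g (X ω)) ⁻¹' A) = ((P.map X).restrict (S i)).map g A := by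
  have hWX : ∀ᵐ ω ∂P, W ω = i ↔ X ω ∈ S i := by
    filter_upwards [ae_of_ae_map hX.aemeasurable (mem_ae_iff.2 hcover)] with ω hω
    obtain ⟨j, hj⟩ := mem_iUnion.1 hω
    rw [hW ω j hj]
    exact ⟨fun h => h ▸ hj, fun hi => by_contra fun hne => disjoint_left.1 (hdisj hne) hj hi⟩
  rw [Measure.map_apply hg hA, Measure.restrict_apply (hg hA),
    Measure.map_apply hX ((hg hA).inter (hS i))]
  refine measure_congr (eventuallyEq_set.2 ?_)
  filter_upwards [hWX] with ω hω
  simp [hω, and_comm]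

theorem mEntropy_eq_log_card {α : Type*} [MeasurableSpace α] [Fintype α] [Nonempty α]
    {ν : Measure α} (h : ∀ a, ν {a} = (Fintype.card α : ℝ≥0∞)⁻¹) :
    mEntropy ν = Real.log (Fintype.card α) := by
  have hcard : (Fintype.card α : ℝ) ≠ 0 := Nat.cast_ne_zero.2 Fintype.card_ne_zero
  simp only [mEntropy, tsum_fintype, h, ENNReal.toReal_inv, ENNReal.toReal_natCast,
    Real.log_inv, Finset.sum_const, Finset.card_univ, nsmul_eq_mul]
  field_simp

section UniformIndex

variable {Ω β ι : Type*} [MeasurableSpace Ω] [MeasurableSpace β] [MeasurableSpace ι]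
  [MeasurableSingletonClass ι] {P : Measure Ω} {Y : Ω → β} {W : Ω → ι}
  {ν : Measure β}

theorem measure_preimage_inter_preimage_eq_card_mul (hW : Measurable W)
    (h : ∀ i A, MeasurableSet A → P (W ⁻¹' {i} ∩ Y ⁻¹' A) = ν A) {A : Set β}
    (hA : MeasurableSet A) (T : Finset ι) : P (W ⁻¹' T ∩ Y ⁻¹' A) = #T * ν A := by
  rw [← Measure.restrict_apply (hW T.measurableSet),
    ← sum_measure_preimage_singleton T fun i _ => hW (measurableSet_singleton i)]
  simp [Measure.restrict_apply (hW (measurableSet_singleton _)), h _ _ hA]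

theorem map_eq_card_smul_of_measure_inter_eq [Fintype ι] (hY : Measurable Y) (hW : Measurable W)
    (h : ∀ i A, MeasurableSet A → P (W ⁻¹' {i} ∩ Y ⁻¹' A) = ν A) :
    P.map Y = (Fintype.card ι : ℝ≥0∞) • ν := by
  ext A hA
  simpa [Measure.map_apply hY hA] using
    measure_preimage_inter_preimage_eq_card_mul hW h hA Finset.univ

theorem map_prodMk_eq_prod_uniformOn_of_measure_inter_eq [Fintype ι] [IsFiniteMeasure P]
    [Nonempty ι]     (hY : Measurable Y) (hW : Measurable W)
    (h : ∀ i A, MeasurableSet A → P (W ⁻¹' {i} ∩ Y ⁻¹' A) = ν A) :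
    P.map (fun ω => (Y ω, W ω)) = (P.map Y).prod (uniformOn univ) := by
  refine (Measure.prod_eq fun A T hA hT => ?_).symm
  have hcard : (Fintype.card ι : ℝ≥0∞) ≠ 0 := Nat.cast_ne_zero.2 Fintype.card_ne_zero
  rw [Measure.map_apply (hY.prodMk hW) (hA.prod hT), mk_preimage_prod, inter_comm,
    ← T.toFinite.coe_toFinset, measure_preimage_inter_preimage_eq_card_mul hW h hA,
    map_eq_card_smul_of_measure_inter_eq hY hW h, uniformOn_univ, Measure.count_apply_finset,
    Measure.smul_apply, smul_eq_mul, ENNReal.div_eq_inv_mul, mul_mul_mul_comm,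
    ENNReal.mul_inv_cancel hcard (ENNReal.natCast_ne_top _), one_mul, mul_comm]

theorem condDistrib_singleton_ae_eq_of_measure_inter_eq [Fintype ι] [StandardBorelSpace ι]
    [Nonempty ι] [IsFiniteMeasure P] (hY : Measurable Y) (hW : Measurable W)
    (h : ∀ i A, MeasurableSet A → P (W ⁻¹' {i} ∩ Y ⁻¹' A) = ν A) :
    ∀ᵐ y ∂P.map Y, ∀ i, condDistrib W Y P y {i} = (Fintype.card ι : ℝ≥0∞)⁻¹ := by
  have hlaw := map_prodMk_eq_prod_uniformOn_of_measure_inter_eq hY hW h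
  rw [← Measure.compProd_const] at hlaw
  filter_upwards [condDistrib_ae_eq_of_measure_eq_compProd Y hW.aemeasurable hlaw] with y hy i
  simp [hy, uniformOn_univ]

end UniformIndex

theorem condEntropyDG_eq_log_card {Ω α β : Type*} [MeasurableSpace Ω] [MeasurableSpace α]
    [StandardBorelSpace α] [Fintype α] [Nonempty α] [MeasurableSpace β] {μ : Measure Ω}
    [IsProbabilityMeasure μ] {W : Ω → α} {Y : Ω → β} (hY : AEMeasurable Y μ)
    (h : ∀ᵐ y ∂μ.map Y, ∀ a, condDistrib W Y μ y {a} = (Fintype.card α : ℝ≥0∞)⁻¹) :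
    condEntropyDG μ W Y = Real.log (Fintype.card α) := by
  have := Measure.isProbabilityMeasure_map hY
  rw [condEntropyDG, integral_congr_ae (h.mono fun y hy => mEntropy_eq_log_card hy),
    integral_const, probReal_univ, one_smul]

theorem cdf_construction_achieves_log_L_general
    {Ω : Type*} [MeasurableSpace Ω] (P : Measure Ω) [IsProbabilityMeasure P]
    (X : Ω → ℝ) (hX : Measurable X)
    (hcont : Continuous fun x => (P.map X (Set.Iic x)).toReal)
    (L : ℕ) [Nonempty (Fin L)] (S : Fin L → Set ℝ)
    (hord : ∀ i, (S i).OrdConnected)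
    (hdisj : Pairwise (Function.onFun Disjoint S))
    (hordered : ∀ i j : Fin L, i < j → ∀ x ∈ S i, ∀ y ∈ S j, x < y)
    (hmass : ∀ i, P.map X (S i) = (L : ENNReal)⁻¹)
    (g : ℝ → ℝ) (hgmeas : Measurable g)
    (hg : ∀ i : Fin L, ∀ x ∈ S i,
      g x = (P.map X (Set.Iic x)).toReal - (i : ℕ) / L)
    (W : Ω → Fin L) (hWmeas : Measurable W)
    (hW : ∀ ω i, X ω ∈ S i → W ω = i)
    (Y : Ω → ℝ) (hY : Y = fun ω => g (X ω)) :
    P.map Y = (L : ENNReal) • volume.restrict (Set.Icc 0 (1 / (L : ℝ))) ∧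
      (∀ᵐ y ∂(P.map Y), ∀ i : Fin L, ∃! x, x ∈ S i ∧ g x = y) ∧
      (∀ᵐ y ∂(P.map Y), ∀ i : Fin L, condDistrib W Y P y {i} = (L : ENNReal)⁻¹) ∧
      condEntropyDG P W Y = Real.log L := by
  set μ := P.map X
  have : IsProbabilityMeasure μ := Measure.isProbabilityMeasure_map hX.aemeasurable
  have hSm : ∀ i, MeasurableSet (S i) := fun i => (hord i).measurableSet
  have hYm : Measurable Y := hY ▸ hgmeas.comp hX
  have hgG := eqOn_measureReal_Iic_inter_of_eq_sub hSm hdisj hordered hmass hg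
  have hbranch : ∀ i, (μ.restrict (S i)).map g = volume.restrict (Icc 0 (1 / (L : ℝ))) :=
    fun i => by
      rw [map_restrict_eq_restrict_Icc_of_eqOn μ (hSm i) hcont (hgG i), measureReal_def, hmass]
      simp
  have hjoint : ∀ i A, MeasurableSet A →
      P (W ⁻¹' {i} ∩ Y ⁻¹' A) = volume.restrict (Icc 0 (1 / (L : ℝ))) A := fun i A hA => by
    rw [hY, measure_preimage_inter_preimage_comp_eq_map_restrict hX hgmeas hSm hdisj
      (measure_compl_iUnion_eq_zero_of_measure_eq_inv hSm hdisj hmass) hW i hA, hbranch]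
  have hlaw := map_eq_card_smul_of_measure_inter_eq hYm hWmeas hjoint
  have hcond := condDistrib_singleton_ae_eq_of_measure_inter_eq hYm hWmeas hjoint
  rw [Fintype.card_fin] at hlaw
  refine ⟨hlaw, ?_, by simpa using hcond,
    by simpa using condEntropyDG_eq_log_card hYm.aemeasurable hcond⟩
  rw [hlaw]
  refine ae_all_iff.2 fun i => Measure.ae_smul_measure ?_ _
  rw [← hbranch i]
  exact ae_existsUnique_mem_preimage_of_eqOn μ (hord i) hcont hgmeas (hgG i)

/-- if the support of `X` splits into `L` ordered disjoint intervals each of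
probability `1/L` and `g(x) = F_X(x) − (l−1)/L` on the `l`-th interval, then `Y = g(X)` is
uniform on `[0, 1/L]`, a.e. `y` has exactly one preimage in each interval, the branch index
`W` is conditionally uniform given `Y`, and `H(W|Y) = log L` (the maximal loss). -/
theorem cdf_construction_achieves_log_L
    {Ω : Type*} [MeasurableSpace Ω] (P : Measure Ω) [IsProbabilityMeasure P]
    (X : Ω → ℝ) (hX : Measurable X) (f : ℝ → ℝ)
    (hdens : P.map X = volume.withDensity fun x => ENNReal.ofReal (f x))
    (hcont : Continuous fun x => (P.map X (Set.Iic x)).toReal)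
    (L : ℕ) [Nonempty (Fin L)] (S : Fin L → Set ℝ)
    (hord : ∀ i, (S i).OrdConnected)
    (hdisj : Pairwise (Function.onFun Disjoint S))
    (hordered : ∀ i j : Fin L, i < j → ∀ x ∈ S i, ∀ y ∈ S j, x < y)
    (hsupp : ∀ x, x ∉ ⋃ i, S i → f x = 0)
    (hpos : ∀ i, ∀ x ∈ S i, 0 < f x)
    (hmass : ∀ i, P.map X (S i) = (L : ENNReal)⁻¹)
    (g : ℝ → ℝ) (hgmeas : Measurable g)
    (hg : ∀ i : Fin L, ∀ x ∈ S i,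
      g x = (P.map X (Set.Iic x)).toReal - (i : ℕ) / L)
    (W : Ω → Fin L) (hWmeas : Measurable W)
    (hW : ∀ ω i, X ω ∈ S i → W ω = i)
    (Y : Ω → ℝ) (hY : Y = fun ω => g (X ω)) :
    P.map Y = (L : ENNReal) • volume.restrict (Set.Icc 0 (1 / (L : ℝ))) ∧
      (∀ᵐ y ∂(P.map Y), ∀ i : Fin L, ∃! x, x ∈ S i ∧ g x = y) ∧
      (∀ᵐ y ∂(P.map Y), ∀ i : Fin L, condDistrib W Y P y {i} = (L : ENNReal)⁻¹) ∧
      condEntropyDG P W Y = Real.log L :=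
  cdf_construction_achieves_log_L_general P X hX hcont L S hord hdisj hordered hmass g hgmeas hg W
    hWmeas hW Y hY
end

section
/- Let X be a discrete random variable, g a function, Y = g(X), and W = w(X) any function of X such that X is determined by the pair (W, Y) (i.e., the map x ↦ (w(x), g(x)) is injective on the support of X). Then H(X | Y) = H(W | Y). -/
open MeasureTheory

/-- Shannon entropy of a discrete random variable `X` under `μ`. -/
noncomputable def dEntropy {Ω α : Type*} [MeasurableSpace Ω] (μ : Measure Ω) (X : Ω → α) : ℝ :=
  - ∑' a, (μ (X ⁻¹' {a})).toReal * Real.log (μ (X ⁻¹' {a})).toReal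

/-- Shannon conditional entropy `H(X|Y) = H(X,Y) - H(Y)` for discrete random variables. -/
noncomputable def dCondEntropy {Ω α β : Type*} [MeasurableSpace Ω] (μ : Measure Ω)
    (X : Ω → α) (Y : Ω → β) : ℝ :=
  dEntropy μ (fun ω => (X ω, Y ω)) - dEntropy μ Y

/-- preimage of a set of null atoms is null -/
lemma null_preimage_of_null {Ω α : Type*} [MeasurableSpace Ω] [Countable α]
    (μ : Measure Ω) (X : Ω → α) (T : Set α) (hT : ∀ a ∈ T, μ (X ⁻¹' {a}) = 0) :
    μ (X ⁻¹' T) = 0 := by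
  have : X ⁻¹' T = ⋃ a : T, X ⁻¹' {(a : α)} := by
    ext ω; simp
  rw [this]
  exact measure_iUnion_null fun a => hT a a.2

/-- Entropy is invariant under a map injective on the support. -/
lemma dEntropy_comp_of_injOn {Ω α β : Type*} [MeasurableSpace Ω] [Countable α]
    (μ : Measure Ω) [IsProbabilityMeasure μ] (X : Ω → α) (f : α → β)
    (hinj : Set.InjOn f {a | μ (X ⁻¹' {a}) ≠ 0}) :
    dEntropy μ (fun ω => f (X ω)) = dEntropy μ X := by
  unfold dEntropy
  congr 1
  -- key fact (A)
  have hA : ∀ a : α, μ (X ⁻¹' {a}) ≠ 0 →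
      μ ((fun ω => f (X ω)) ⁻¹' {f a}) = μ (X ⁻¹' {a}) := by
    intro a ha
    have hpre : (fun ω => f (X ω)) ⁻¹' {f a} = X ⁻¹' (f ⁻¹' {f a}) := rfl
    have hnull : μ (X ⁻¹' (f ⁻¹' {f a} \ {a})) = 0 := by
      apply null_preimage_of_null
      intro a' ⟨hfa', hne⟩
      by_contra h
      exact hne (hinj h ha hfa')
    have hsub : X ⁻¹' (f ⁻¹' {f a}) ⊆ X ⁻¹' {a} ∪ X ⁻¹' (f ⁻¹' {f a} \ {a}) := by
      intro ω hω
      by_cases h : X ω = a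
      · exact Or.inl h
      · exact Or.inr ⟨hω, h⟩
    rw [hpre]
    apply le_antisymm
    · calc μ (X ⁻¹' (f ⁻¹' {f a})) ≤ μ (X ⁻¹' {a} ∪ X ⁻¹' (f ⁻¹' {f a} \ {a})) :=
            measure_mono hsub
        _ ≤ μ (X ⁻¹' {a}) + μ (X ⁻¹' (f ⁻¹' {f a} \ {a})) := measure_union_le _ _
        _ = μ (X ⁻¹' {a}) := by rw [hnull, add_zero]
    · exact measure_mono (fun ω hω => by simpa using congrArg f hω)
  -- set up the bijection
  set tα : α → ℝ := fun a => (μ (X ⁻¹' {a})).toReal * Real.log (μ (X ⁻¹' {a})).toReal with htα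
  set tβ : β → ℝ := fun b =>
    (μ ((fun ω => f (X ω)) ⁻¹' {b})).toReal * Real.log (μ ((fun ω => f (X ω)) ⁻¹' {b})).toReal
    with htβ
  have hμne : ∀ a : α, tα a ≠ 0 → μ (X ⁻¹' {a}) ≠ 0 := by
    intro a h hm
    apply h
    simp [htα, hm]
  refine tsum_eq_tsum_of_ne_zero_bij (fun a => f a.1) ?_ ?_ ?_
  · intro a1 a2 h
    exact Subtype.ext (hinj (hμne _ a1.2) (hμne _ a2.2) h)
  · intro b hb
    have hbne : μ ((fun ω => f (X ω)) ⁻¹' {b}) ≠ 0 := by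
      intro hm
      apply hb
      simp [htβ, hm]
    have : ∃ a, f a = b ∧ μ (X ⁻¹' {a}) ≠ 0 := by
      by_contra h
      push_neg at h
      apply hbne
      have : (fun ω => f (X ω)) ⁻¹' {b} = X ⁻¹' (f ⁻¹' {b}) := rfl
      rw [this]
      apply null_preimage_of_null
      intro a ha
      by_contra hc
      exact hc (h a ha)
    obtain ⟨a, hfa, hμa⟩ := this
    have hta : tα a ≠ 0 := by
      have hAa := hA a hμa
      have heq : tβ b = tα a := by rw [← hfa]; simp [htβ, htα, hAa]
      rw [← heq]; exact hb
    exact ⟨⟨a, hta⟩, hfa⟩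
  · rintro ⟨a, ha⟩
    have := hA a (hμne a ha)
    simp [htα, htβ, this]

/-- if `x ↦ (w(x), g(x))` is injective on the support of the law of `X`,
then the information loss of `Y = g(X)` equals the uncertainty about `W = w(X)`:
`H(X|Y) = H(W|Y)`. -/
theorem condEntropy_eq_condEntropy_of_injOn_pair
    {Ω α β γ : Type*} [MeasurableSpace Ω] [Countable α]
    (μ : Measure Ω) [IsProbabilityMeasure μ] (X : Ω → α) (g : α → β) (w : α → γ)
    (hinj : Set.InjOn (fun a => (w a, g a)) {a | μ (X ⁻¹' {a}) ≠ 0}) :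
    dCondEntropy μ X (fun ω => g (X ω)) =
      dCondEntropy μ (fun ω => w (X ω)) (fun ω => g (X ω)) := by
  unfold dCondEntropy
  congr 1
  have h1 : dEntropy μ (fun ω => ((X ω), g (X ω))) = dEntropy μ X :=
    dEntropy_comp_of_injOn μ X (fun a => (a, g a))
      (fun a _ a' _ h => congrArg Prod.fst h)
  have h2 : dEntropy μ (fun ω => (w (X ω), g (X ω))) = dEntropy μ X :=
    dEntropy_comp_of_injOn μ X (fun a => (w a, g a)) hinj
  rw [h1, h2]
end
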